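/- arXiv:2503.17714 — 3 statements merged into one kernel-verified Lean document; each statement's English description precedes it below -/
import Mathlib

section
/- Let D be a division ring, Γ₀ a linearly ordered commutative group with zero, and v : D → Γ₀ a valuation (i.e. v(xy) = v(x)v(y), v(x+y) ≤ max(v(x), v(y)), v(1) = 1, v(0) = 0). If x ∈ D satisfies v(x − 1) < 1, x ≠ 1, and x^k = 1 for some positive integer k, then v(k·1_D) < 1 (that is, the image of k in D lies in the maximal ideal of the valuation ring). -/
/-!
Put `y = x - 1`. Since `x ^ k - 1 = (1 + x + ⋯ + x ^ (k - 1)) * y` and `y ≠ 0`, the geometric sum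
vanishes, so `k = ∑ i < k, (1 - x ^ i)`. Each `x ^ i` again lies in `1 + M`, so every summand
lies in `M`, and hence so does `k`.
-/

theorem geom_sum_eq_zero_of_pow_eq_one {R : Type*} [Ring R] [NoZeroDivisors R] {x : R}
    (hx : x ≠ 1) {n : ℕ} (hxn : x ^ n = 1) : ∑ i ∈ Finset.range n, x ^ i = 0 := by
  have h : (∑ i ∈ Finset.range n, x ^ i) * (x - 1) = 0 := by
    rw [geom_sum_mul, hxn, sub_self]
  exact (mul_eq_zero.mp h).resolve_right (sub_ne_zero.mpr hx)

namespace Valuation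

variable {R Γ₀ : Type*} [Ring R] [LinearOrderedCommMonoidWithZero Γ₀] (v : Valuation R Γ₀)
  {x : R}

theorem map_pow_sub_one_lt_one (hx : v (x - 1) < 1) (n : ℕ) : v (x ^ n - 1) < 1 := by
  have hvx : v x = 1 := by
    simpa using v.map_eq_of_sub_lt (x := 1) (y := x) (by simpa using hx)
  induction n with
  | zero => simpa using zero_le.trans_lt hx
  | succ n ih =>
    have hsplit : x ^ (n + 1) - 1 = x ^ n * (x - 1) + (x ^ n - 1) := by noncomm_ring
    rw [hsplit]
    refine v.map_add_lt ?_ ih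
    simpa [hvx] using hx

theorem map_geom_sum_sub_natCast_lt_one (hx : v (x - 1) < 1) (n : ℕ) :
    v (∑ i ∈ Finset.range n, x ^ i - n) < 1 := by
  have hsum : ∑ i ∈ Finset.range n, x ^ i - n = ∑ i ∈ Finset.range n, (x ^ i - 1) := by
    simp [Finset.sum_sub_distrib]
  rw [hsum]
  exact v.map_sum_lt (zero_le.trans_lt hx).ne' fun i _ => v.map_pow_sub_one_lt_one hx i

end Valuation

theorem congruence_step1_general {D : Type*} [DivisionRing D] {Γ₀ : Type*}
    [LinearOrderedCommGroupWithZero Γ₀] (v : Valuation D Γ₀)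
    (x : D) (hx : v (x - 1) < 1) (hx1 : x ≠ 1)
    (k : ℕ) (hxk : x ^ k = 1) :
    v (k : D) < 1 := by
  have h := v.map_geom_sum_sub_natCast_lt_one hx k
  rwa [geom_sum_eq_zero_of_pow_eq_one hx1 hxk, zero_sub, v.map_neg] at h

/-- If `x` lies in `1 + M` (i.e. `v (x - 1) < 1`), `x ≠ 1`, and `x ^ k = 1` for a
positive integer `k`, then the image of `k` in `D` lies in the maximal ideal of the
valuation ring, i.e. `v (k : D) < 1`. -/
theorem congruence_step1 {D : Type*} [DivisionRing D] {Γ₀ : Type*}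
    [LinearOrderedCommGroupWithZero Γ₀] (v : Valuation D Γ₀)
    (x : D) (hx : v (x - 1) < 1) (hx1 : x ≠ 1)
    (k : ℕ) (hk : 0 < k) (hxk : x ^ k = 1) :
    v (k : D) < 1 :=
  congruence_step1_general v x hx hx1 k hxk
end

section
/- Let D be a division ring, Γ₀ a linearly ordered commutative group with zero, and v : D → Γ₀ a valuation (i.e. v(xy) = v(x)v(y), v(x+y) ≤ max(v(x), v(y)), v(1) = 1, v(0) = 0). If x ∈ D satisfies v(x − 1) < 1, x ≠ 1, and x has finite multiplicative order, then there exists a prime number p such that v(p·1_D) < 1 and the order of x is a power of p. -/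
/-!
If `z ≠ 1` lies in `1 + M` and `z ^ q = 1`, then `∑_{i<q} z ^ i = 0`, so `q = ∑_{i<q} (1 - z ^ i)`
lies in `M`. Applying this to `x ^ (m / q)` for each prime `q ∣ m = orderOf x` puts every prime
divisor of `m` into `M`; by Bézout two distinct primes cannot both lie in `M`, so `m` is a power
of a single prime.
-/

namespace Valuation

variable {R Γ₀ : Type*} [Ring R] [LinearOrderedCommGroupWithZero Γ₀] (v : Valuation R Γ₀)

/-- The paper's group `1 + M`, taken as a submonoid of `R`. -/
def principalUnits : Submonoid R where
  carrier := {x | v (x - 1) < 1}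
  one_mem' := by simp
  mul_mem' {a b} ha hb := by
    have hva : v a ≤ 1 := by
      simpa using v.map_add_le (le_of_lt ha) v.map_one.le (x := a - 1) (y := 1)
    have hsplit : a * b - 1 = a * (b - 1) + (a - 1) := by noncomm_ring
    simp only [Set.mem_ofPred_eq, hsplit]
    refine v.map_add_lt ?_ ha
    rw [v.map_mul]
    exact lt_of_le_of_lt (mul_le_of_le_one_left' hva) hb

lemma map_intCast_le_one (n : ℤ) : v (n : R) ≤ 1 := intCast_mem v.integer n

lemma not_coprime_of_map_natCast_lt_one {m n : ℕ} (hm : v (m : R) < 1) (hn : v (n : R) < 1) :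
    ¬ m.Coprime n := by
  intro hmn
  obtain ⟨a, b, hab⟩ := Nat.isCoprime_iff_coprime.mpr hmn
  have hab' : (a : R) * m + (b : R) * n = 1 := by exact_mod_cast congrArg (Int.cast (R := R)) hab
  have : v (1 : R) < 1 := by
    rw [← hab']
    refine v.map_add_lt ?_ ?_ <;> rw [v.map_mul]
    · exact lt_of_le_of_lt (mul_le_of_le_one_left' (v.map_intCast_le_one a)) hm
    · exact lt_of_le_of_lt (mul_le_of_le_one_left' (v.map_intCast_le_one b)) hn
  simp at this

theorem eq_of_prime_of_map_natCast_lt_one {p q : ℕ} (hp : p.Prime) (hq : q.Prime)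
    (hvp : v (p : R) < 1) (hvq : v (q : R) < 1) : p = q := by
  by_contra hpq
  exact v.not_coprime_of_map_natCast_lt_one hvp hvq ((Nat.coprime_primes hp hq).mpr hpq)

theorem map_natCast_lt_one_of_pow_eq_one [NoZeroDivisors R] {z : R} {n : ℕ}
    (hz : z ∈ v.principalUnits) (hzn : z ^ n = 1) (hz1 : z ≠ 1) : v (n : R) < 1 := by
  have hgeom : ∑ i ∈ Finset.range n, z ^ i = 0 := by
    have : (z - 1) * ∑ i ∈ Finset.range n, z ^ i = 0 := by rw [mul_geom_sum, hzn, sub_self]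
    exact (mul_eq_zero.mp this).resolve_left (sub_ne_zero.mpr hz1)
  have hn : (n : R) = ∑ i ∈ Finset.range n, (1 - z ^ i) := by
    simp [Finset.sum_sub_distrib, hgeom]
  rw [hn]
  refine v.map_sum_lt one_ne_zero fun i _ => ?_
  rw [v.map_sub_swap]
  exact v.principalUnits.pow_mem hz i

theorem map_natCast_lt_one_of_prime_dvd_orderOf [NoZeroDivisors R] {x : R}
    (hx : x ∈ v.principalUnits) (hfin : IsOfFinOrder x) {q : ℕ} (hq : q.Prime)
    (hqx : q ∣ orderOf x) : v (q : R) < 1 := by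
  obtain ⟨k, hk⟩ := hqx
  have hk0 : k ≠ 0 := by rintro rfl; simp [hfin.orderOf_pos.ne'] at hk
  refine v.map_natCast_lt_one_of_pow_eq_one (z := x ^ k) (v.principalUnits.pow_mem hx k) ?_ ?_
  · rw [← pow_mul, mul_comm, ← hk, pow_orderOf_eq_one]
  · refine pow_ne_one_of_lt_orderOf hk0 ?_
    rw [hk]
    exact lt_mul_left (Nat.pos_of_ne_zero hk0) hq.one_lt

end Valuation

/-- Every nontrivial torsion element of `1 + M` has order a power of a prime `p`
with `v (p : D) < 1` (the residue characteristic). -/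
theorem order_of_torsion_in_one_add_maximalIdeal {D : Type*} [DivisionRing D] {Γ₀ : Type*}
    [LinearOrderedCommGroupWithZero Γ₀] (v : Valuation D Γ₀)
    (x : D) (hx : v (x - 1) < 1) (hx1 : x ≠ 1) (hfin : IsOfFinOrder x) :
    ∃ p : ℕ, p.Prime ∧ v (p : D) < 1 ∧ ∃ n : ℕ, orderOf x = p ^ n := by
  have hxU : x ∈ v.principalUnits := hx
  obtain ⟨p, hp, hpx⟩ := Nat.exists_prime_and_dvd (mt orderOf_eq_one_iff.mp hx1)
  have hvp := v.map_natCast_lt_one_of_prime_dvd_orderOf hxU hfin hp hpx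
  refine ⟨p, hp, hvp, _, Nat.eq_prime_pow_of_unique_prime_dvd hfin.orderOf_pos.ne' ?_⟩
  intro q hq hqx
  exact v.eq_of_prime_of_map_natCast_lt_one hq hp
    (v.map_natCast_lt_one_of_prime_dvd_orderOf hxU hfin hq hqx) hvp
end

section
/- Let D be a division ring, Γ₀ a linearly ordered commutative group with zero, and v : D → Γ₀ a valuation (i.e. v(xy) = v(x)v(y), v(x+y) ≤ max(v(x), v(y)), v(1) = 1, v(0) = 0). Suppose that v(n·1_D) = 1 for every positive integer n (residue characteristic zero). Then the group 1 + M is torsion-free: if x ∈ D satisfies v(x − 1) < 1 and x^k = 1 for some positive integer k, then x = 1. -/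
/-- In residue characteristic zero (`v (n : D) = 1` for all positive integers `n`),
the group `1 + M` is torsion-free. -/
theorem one_add_maximalIdeal_torsionFree {D : Type*} [DivisionRing D] {Γ₀ : Type*}
    [LinearOrderedCommGroupWithZero Γ₀] (v : Valuation D Γ₀)
    (hres : ∀ n : ℕ, 0 < n → v (n : D) = 1) :
    ∀ x : D, v (x - 1) < 1 → ∀ k : ℕ, 0 < k → x ^ k = 1 → x = 1 := by
  intro x hxv k hk hxk
  by_contra hx
  set t := x - 1 with ht
  have ht0 : t ≠ 0 := sub_ne_zero.mpr hx
  have hvt0 : v t ≠ 0 := v.ne_zero_iff.mpr ht0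
  have hx' : x = t + 1 := by rw [ht]; abel
  obtain ⟨m, rfl⟩ : ∃ m, k = m + 1 := ⟨k - 1, (Nat.succ_pred_eq_of_pos hk).symm⟩
  have hexp : (t + 1) ^ (m + 1) =
      ∑ i ∈ Finset.range (m + 2), t ^ i * (Nat.choose (m + 1) i : D) := by
    simpa using (Commute.one_right t).add_pow (m + 1)
  have hsum : ∑ i ∈ Finset.range (m + 2), t ^ i * (Nat.choose (m + 1) i : D) = 1 := by
    rw [← hexp, ← hx', hxk]
  -- peel off the i = 0 and i = 1 terms
  rw [Finset.sum_range_succ', Finset.sum_range_succ'] at hsum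
  simp only [pow_zero, pow_one, Nat.choose_zero_right, Nat.choose_one_right, Nat.cast_one,
    mul_one] at hsum
  -- hsum : (∑ i ∈ range m, t ^ (i+2) * (choose (m+1) (i+2) : D)) + t * (m+1) + 1 = 1
  have heq : (∑ i ∈ Finset.range m, t ^ (i + 1 + 1) * (Nat.choose (m + 1) (i + 1 + 1) : D))
      + t * ((m : D) + 1) = 0 := by
    rw [pow_one, Nat.choose_one_right, Nat.cast_add, Nat.cast_one] at hsum
    exact add_eq_right.mp hsum
  have hvm : v (t * ((m : D) + 1)) = v t := by
    rw [v.map_mul]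
    have : ((m : D) + 1) = ((m + 1 : ℕ) : D) := by push_cast; ring
    rw [this, hres (m + 1) (Nat.succ_pos m), mul_one]
  have hlt : v (∑ i ∈ Finset.range m,
      t ^ (i + 1 + 1) * (Nat.choose (m + 1) (i + 1 + 1) : D)) < v t := by
    apply Valuation.map_sum_lt _ hvt0
    intro i _
    rw [v.map_mul, v.map_pow]
    have hc : v ((Nat.choose (m + 1) (i + 1 + 1) : D)) ≤ 1 := by
      rcases Nat.eq_zero_or_pos (Nat.choose (m + 1) (i + 1 + 1)) with h | h
      · simp [h]
      · rw [hres _ h]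
    calc v t ^ (i + 1 + 1) * v ((Nat.choose (m + 1) (i + 1 + 1) : D))
        ≤ v t ^ (i + 1 + 1) * 1 := by
          exact mul_le_mul_right hc _
      _ = v t ^ (i + 1 + 1) := mul_one _
      _ < v t := by
          rw [pow_succ']
          calc v t * v t ^ (i + 1) < v t * 1 :=
                mul_lt_mul_of_pos_left (pow_lt_one₀ zero_le' hxv (Nat.succ_ne_zero i)) (zero_lt_iff.mpr hvt0)
            _ = v t := mul_one _
  have : v 0 = v t := by
    rw [← heq, Valuation.map_add_eq_of_lt_right _ (hvm ▸ hlt), hvm]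
  rw [v.map_zero] at this
  exact hvt0 this.symm
end
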